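/- Define DG₂ : ℂ² → ℂ by DG₂(x,y) = ∏_{L ∈ 𝔏} L/(L−1), where 𝔏 is the list of six linear forms {x, y, x+y, x+2y, x+3y, 2x+3y} evaluated at (x,y). Then for every z ∈ ℂ with z ∉ {1/2, −1/2, 3/2}, the limit lim_{ε→0} ε·DG₂(3/2 − z + ε, z − 1/2) exists and equals z(z + 3/2)/(z − 1/2)². -/
import Mathlib


open Filter

/-- The rational function `D_B(Λ) = ∏_{γ>0} ⟨Λ,γ∨⟩/(⟨Λ,γ∨⟩−1)` of `G₂` in the coordinates
`x = ⟨Λ,α∨⟩`, `y = ⟨Λ,β∨⟩`, a product over the six linear forms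
`x, y, x+y, x+2y, x+3y, 2x+3y`. -/
noncomputable def DG₂ (x y : ℂ) : ℂ :=
  (x / (x - 1)) * (y / (y - 1)) * ((x + y) / (x + y - 1)) * ((x + 2*y) / (x + 2*y - 1)) *
    ((x + 3*y) / (x + 3*y - 1)) * ((2*x + 3*y) / (2*x + 3*y - 1))

set_option maxHeartbeats 1000000 in
/-- The residue of `DG₂` along the polar hyperplane `S₅ = {x + y = 1}` (parameterized by
`(x,y) = (3/2 − z, z − 1/2)`) equals `z(z+3/2)/(z−1/2)²`. -/
theorem residue_of_DG₂_along_S₅ (z : ℂ) (h1 : z ≠ 1/2) (h2 : z ≠ -1/2) (h3 : z ≠ 3/2) :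
    Tendsto (fun ε : ℂ => ε * DG₂ (3/2 - z + ε) (z - 1/2)) (nhdsWithin 0 {(0 : ℂ)}ᶜ)
      (nhds (z * (z + 3/2) / (z - 1/2)^2)) := by
  have h1' : z - 1/2 ≠ 0 := sub_ne_zero.mpr h1
  have h2' : z + 1/2 ≠ 0 := by
    intro h; apply h2; linear_combination h
  have h3' : z - 3/2 ≠ 0 := sub_ne_zero.mpr h3
  set g : ℂ → ℂ := fun ε =>
    ((3/2 - z + ε) / (3/2 - z + ε - 1)) * ((z - 1/2) / (z - 1/2 - 1)) * (1 + ε) *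
      ((3/2 - z + ε + 2*(z - 1/2)) / (3/2 - z + ε + 2*(z - 1/2) - 1)) *
      ((3/2 - z + ε + 3*(z - 1/2)) / (3/2 - z + ε + 3*(z - 1/2) - 1)) *
      ((2*(3/2 - z + ε) + 3*(z - 1/2)) / (2*(3/2 - z + ε) + 3*(z - 1/2) - 1)) with hgdef
  have heq : (fun ε : ℂ => ε * DG₂ (3/2 - z + ε) (z - 1/2)) =ᶠ[nhdsWithin 0 {(0 : ℂ)}ᶜ] g := by
    filter_upwards [self_mem_nhdsWithin] with ε hε
    have hε' : (ε : ℂ) ≠ 0 := hε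
    simp only [DG₂, hgdef]
    rw [show (3/2 - z + ε + (z - 1/2)) = 1 + ε by ring,
        show (1 + ε - 1 : ℂ) = ε by ring]
    have key : ∀ a b c d e : ℂ, ε * (a * b * ((1+ε)/ε) * c * d * e) = a * b * (1+ε) * c * d * e := by
      intro a b c d e
      field_simp
    exact key _ _ _ _ _
  have hg : Tendsto g (nhds 0) (nhds (z * (z + 3/2) / (z - 1/2)^2)) := by
    have hc : ContinuousAt g 0 := by
      have d1 : (3/2 - z + (0:ℂ) - 1) ≠ 0 := by
        intro h; apply h1'; linear_combination -h
      have d2 : (z - 1/2 - 1 : ℂ) ≠ 0 := by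
        intro h; apply h3'; linear_combination h
      have d3 : (3/2 - z + (0:ℂ) + 2*(z - 1/2) - 1) ≠ 0 := by
        intro h; apply h1'; linear_combination h
      have d4 : (3/2 - z + (0:ℂ) + 3*(z - 1/2) - 1) ≠ 0 := by
        intro h; apply h1'; linear_combination h/2
      have d5 : (2*(3/2 - z + (0:ℂ)) + 3*(z - 1/2) - 1) ≠ 0 := by
        intro h; apply h2'; linear_combination h
      apply ContinuousAt.mul
      apply ContinuousAt.mul
      apply ContinuousAt.mul
      apply ContinuousAt.mul
      apply ContinuousAt.mul
      · exact ContinuousAt.div (by fun_prop) (by fun_prop) d1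
      · exact continuousAt_const
      · fun_prop
      · exact ContinuousAt.div (by fun_prop) (by fun_prop) d3
      · exact ContinuousAt.div (by fun_prop) (by fun_prop) d4
      · exact ContinuousAt.div (by fun_prop) (by fun_prop) d5
    have hval : g 0 = z * (z + 3/2) / (z - 1/2)^2 := by
      simp only [hgdef]
      have d1 : (3/2 - z + (0:ℂ) - 1) ≠ 0 := by
        intro h; apply h1'; linear_combination -h
      have d2 : (z - 1/2 - 1 : ℂ) ≠ 0 := by
        intro h; apply h3'; linear_combination h
      have d3 : (3/2 - z + (0:ℂ) + 2*(z - 1/2) - 1) ≠ 0 := by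
        intro h; apply h1'; linear_combination h
      have d4 : (3/2 - z + (0:ℂ) + 3*(z - 1/2) - 1) ≠ 0 := by
        intro h; apply h1'; linear_combination h/2
      have d5 : (2*(3/2 - z + (0:ℂ)) + 3*(z - 1/2) - 1) ≠ 0 := by
        intro h; apply h2'; linear_combination h
      rw [show (3/2 - z + (0:ℂ)) = 3/2 - z by ring]
      rw [show (3/2 - z + 2*(z - 1/2) - 1 : ℂ) = z - 1/2 by ring,
          show (3/2 - z + 3*(z - 1/2) - 1 : ℂ) = 2*(z - 1/2) by ring,
          show (2*(3/2 - z) + 3*(z - 1/2) - 1 : ℂ) = z + 1/2 by ring,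
          show (3/2 - z - 1 : ℂ) = -(z - 1/2) by ring,
          show (z - 1/2 - 1 : ℂ) = z - 3/2 by ring,
          show (3/2 - z + 2*(z - 1/2) : ℂ) = z + 1/2 by ring,
          show (3/2 - z + 3*(z - 1/2) : ℂ) = 2*z by ring,
          show (2*(3/2 - z) + 3*(z - 1/2) : ℂ) = z + 3/2 by ring]
      rw [add_zero, mul_one]
      rw [div_mul_div_comm, div_mul_div_comm, div_mul_div_comm, div_mul_div_comm]
      rw [div_eq_div_iff
        (mul_ne_zero (mul_ne_zero (mul_ne_zero (mul_ne_zero (neg_ne_zero.mpr h1') h3') h1')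
          (mul_ne_zero two_ne_zero h1')) h2') (pow_ne_zero 2 h1')]
      ring
    rw [← hval]
    exact hc.tendsto
  exact Tendsto.congr' heq.symm (hg.mono_left nhdsWithin_le_nhds)
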